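/- arXiv:1301.4121 — 7 statements merged into one kernel-verified Lean document; each statement's English description precedes it below -/
import Mathlib

section
/- Let n ≥ 1 and let G and H be n-vertex simple graphs such that H is a reconstruction of G. Then for every simple graph F with fewer than n vertices, s(F,G) = s(F,H). -/
open SimpleGraph

/-- The vertex-deleted subgraph `G − v`: the induced subgraph of `G` obtained by
deleting `v` and all edges incident with `v`. -/
abbrev vdel {n : ℕ} (G : SimpleGraph (Fin n)) (v : Fin n) :
    SimpleGraph ({v}ᶜ : Set (Fin n)) :=
  G.induce {v}ᶜ

/-- `H` is a reconstruction of `G`: there is a bijection `f` between the vertex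
sets such that `G − v ≅ H − f v` for every vertex `v`. -/
def IsReconstruction {n : ℕ} (G H : SimpleGraph (Fin n)) : Prop :=
  ∃ f : Fin n ≃ Fin n, ∀ v : Fin n, Nonempty (vdel G v ≃g vdel H (f v))

/-- `s(F,G)`: the number of subgraphs of `G` isomorphic to `F`. -/
noncomputable def subCount {k n : ℕ} (F : SimpleGraph (Fin k))
    (G : SimpleGraph (Fin n)) : ℕ :=
  Nat.card {H : G.Subgraph // Nonempty (F ≃g H.coe)}

/-- A finite sequence of simple graphs (on arbitrary finite vertex sets). -/
abbrev GSeq : Type := List (Σ k : ℕ, SimpleGraph (Fin k))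

/-- `c(𝓕,G)`: the number of covers of `G` by the sequence `L`, i.e. of sequences
of subgraphs of `G`, the `i`-th being isomorphic to the `i`-th graph of `L`,
whose union (of both vertex sets and edge sets) is all of `G`. -/
noncomputable def coverCount {n : ℕ} (L : GSeq) (G : SimpleGraph (Fin n)) : ℕ :=
  Nat.card {C : Fin L.length → G.Subgraph //
    (∀ i, Nonempty ((L.get i).2 ≃g (C i).coe)) ∧ (⨆ i, C i) = ⊤}

/-!
Double count the pairs `(S, v)` with `S` a copy of `F` in `G` and `v` a vertex outside `S`.
Every copy misses exactly `n - k` vertices, and the copies missing `v` are exactly the copies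
of `F` in `G - v`; hence `(n - k) · s(F, G) = ∑ᵥ s(F, G - v)`. The right-hand side only depends
on the deck of `G`, and `n - k > 0`.
-/

namespace SimpleGraph

open Finset

variable {U V W : Type*} {G : SimpleGraph V} {G' : SimpleGraph W}

lemma Subgraph.comap_map_of_injective {f : G →g G'} (hf : Function.Injective f)
    (S : G.Subgraph) : (S.map f).comap f = S := by
  ext u v
  · simp [hf.mem_set_image]
  · simp only [comap_adj, map_adj, Relation.map_apply, hf.eq_iff, exists_eq_right_right,
      exists_eq_right, and_iff_right_iff_imp]
    exact fun h => S.adj_sub h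

lemma Subgraph.map_comap_of_verts_subset_range (f : G ↪g G') {S : G'.Subgraph}
    (hS : S.verts ⊆ Set.range f) : (S.comap f.toHom).map f.toHom = S := by
  ext x y
  · constructor
    · rintro ⟨u, hu, rfl⟩
      exact hu
    · intro hx
      obtain ⟨u, rfl⟩ := hS hx
      exact ⟨u, hx, rfl⟩
  · constructor
    · rintro ⟨u, v, ⟨-, h⟩, rfl, rfl⟩
      exact h
    · intro h
      obtain ⟨u, rfl⟩ := hS (S.edge_vert h)
      obtain ⟨v, rfl⟩ := hS (S.edge_vert h.symm)
      exact ⟨u, v, ⟨f.map_rel_iff.1 (S.adj_sub h), h⟩, rfl, rfl⟩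

def Embedding.subgraphEquiv (f : G ↪g G') :
    G.Subgraph ≃ {S : G'.Subgraph // S.verts ⊆ Set.range f} where
  toFun S := ⟨S.map f.toHom, by rintro _ ⟨v, -, rfl⟩; exact ⟨v, rfl⟩⟩
  invFun S := S.1.comap f.toHom
  left_inv := Subgraph.comap_map_of_injective f.injective
  right_inv S := Subtype.ext (Subgraph.map_comap_of_verts_subset_range f S.2)

lemma Embedding.natCard_copies_eq (f : G ↪g G') (F : SimpleGraph U) :
    Nat.card {S : G.Subgraph // Nonempty (F ≃g S.coe)} =
      Nat.card {S : G'.Subgraph // S.verts ⊆ Set.range f ∧ Nonempty (F ≃g S.coe)} := by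
  refine Nat.card_congr <| (f.subgraphEquiv.subtypeEquiv fun S => ?_).trans
    (Equiv.subtypeSubtypeEquivSubtypeInter _ _)
  let e := f.toCopy.isoSubgraphMap S
  exact ⟨fun ⟨i⟩ => ⟨i.trans e⟩, fun ⟨i⟩ => ⟨i.trans e.symm⟩⟩

lemma copyCount_eq_natCard [Fintype V] (G : SimpleGraph V) (F : SimpleGraph U) :
    G.copyCount F = Nat.card {S : G.Subgraph // Nonempty (F ≃g S.coe)} := by
  classical
  rw [copyCount, Nat.card_eq_fintype_card, Fintype.card_subtype]

lemma Iso.copyCount_eq [Fintype V] [Fintype W] (e : G ≃g G') (F : SimpleGraph U) :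
    G.copyCount F = G'.copyCount F := by
  simp only [copyCount_eq_natCard, e.toEmbedding.natCard_copies_eq, RelIso.coe_toRelEmbedding,
    EquivLike.range_eq_univ, Set.subset_univ, true_and]

lemma copyCount_induce_compl_singleton [Fintype V] [DecidableEq V] (v : V) (F : SimpleGraph U) :
    (G.induce {v}ᶜ).copyCount F =
      Nat.card {S : G.Subgraph // v ∉ S.verts ∧ Nonempty (F ≃g S.coe)} := by
  rw [copyCount_eq_natCard, (Embedding.induce _).natCard_copies_eq]
  have hrange : Set.range (Embedding.induce (G := G) {v}ᶜ) = {v}ᶜ := Subtype.range_coe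
  simp only [hrange, Set.subset_compl_singleton_iff]

lemma Subgraph.card_notMem_verts_of_iso [Fintype V] [Fintype U] {F : SimpleGraph U}
    {S : G.Subgraph} [DecidablePred (· ∈ S.verts)] (e : F ≃g S.coe) :
    #{v | v ∉ S.verts} = Fintype.card V - Fintype.card U := by
  rw [← Fintype.card_subtype, Fintype.card_subtype_compl, Fintype.card_congr e.toEquiv.symm]

lemma sum_copyCount_induce_compl_singleton [Fintype V] [DecidableEq V] [Fintype U]
    (G : SimpleGraph V) (F : SimpleGraph U) :
    ∑ v, (G.induce {v}ᶜ).copyCount F = (Fintype.card V - Fintype.card U) * G.copyCount F := by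
  classical
  set copies : Finset G.Subgraph := {S | Nonempty (F ≃g S.coe)}
  have hcount : G.copyCount F = #copies := by
    rw [copyCount_eq_natCard, Nat.card_eq_fintype_card, Fintype.card_subtype]
  have hdeleted (v : V) :
      (G.induce {v}ᶜ).copyCount F = #(copies.bipartiteAbove (fun w S => w ∉ S.verts) v) := by
    rw [copyCount_induce_compl_singleton, Nat.card_eq_fintype_card, Fintype.card_subtype,
      bipartiteAbove, filter_filter]
    simp only [and_comm]
  calc ∑ v, (G.induce {v}ᶜ).copyCount F
    _ = ∑ S ∈ copies, #(univ.bipartiteBelow (fun w S => w ∉ S.verts) S) := by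
      simp only [hdeleted, sum_card_bipartiteAbove_eq_sum_card_bipartiteBelow]
    _ = ∑ S ∈ copies, (Fintype.card V - Fintype.card U) := by
      refine sum_congr rfl fun S hS => ?_
      obtain ⟨e⟩ := (mem_filter.1 hS).2
      exact Subgraph.card_notMem_verts_of_iso e
    _ = (Fintype.card V - Fintype.card U) * G.copyCount F := by
      rw [sum_const, smul_eq_mul, hcount, mul_comm]

end SimpleGraph

theorem stmt_0_general {n : ℕ} (G H : SimpleGraph (Fin n))
    (hrec : IsReconstruction G H) {k : ℕ} (hk : k < n) (F : SimpleGraph (Fin k)) :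
    subCount F G = subCount F H := by
  obtain ⟨f, hf⟩ := hrec
  have hdeck : ∑ v, (G.induce {v}ᶜ).copyCount F = ∑ v, (H.induce {v}ᶜ).copyCount F :=
    calc ∑ v, (G.induce {v}ᶜ).copyCount F
      _ = ∑ v, (H.induce {f v}ᶜ).copyCount F :=
        Finset.sum_congr rfl fun v _ => (hf v).some.copyCount_eq F
      _ = ∑ v, (H.induce {v}ᶜ).copyCount F := f.sum_comp fun v => (H.induce {v}ᶜ).copyCount F
  simp only [sum_copyCount_induce_compl_singleton, Fintype.card_fin] at hdeck
  simpa only [subCount, ← copyCount_eq_natCard] using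
    Nat.eq_of_mul_eq_mul_left (Nat.sub_pos_of_lt hk) hdeck

/-- **Kelly's lemma.** If `H` is a reconstruction of an `n`-vertex graph `G`
(`n ≥ 1`), then `s(F,G) = s(F,H)` for every graph `F` with fewer than `n`
vertices. -/
theorem stmt_0 {n : ℕ} (hn : 1 ≤ n) (G H : SimpleGraph (Fin n))
    (hrec : IsReconstruction G H) {k : ℕ} (hk : k < n) (F : SimpleGraph (Fin k)) :
    subCount F G = subCount F H :=
  stmt_0_general G H hrec hk F
end

section
/- Let G be an n-vertex simple graph and let 𝓕 = (F_1, …, F_m) be any finite sequence of simple graphs. Then ∏_{i=1}^m s(F_i, G) = Σ_X c(𝓕, X) · s(X, G), where the sum is over all isomorphism classes X of simple graphs on at most n vertices. -/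
open SimpleGraph

/-! Expanding the product, `∏ s(F_i, G)` counts the tuples `(H_1, …, H_m)` of subgraphs of `G`
with `H_i ≅ F_i`. Sorting the tuples by their union `U`, those with union `U` are exactly the
covers of `U` by `𝓕`; their number `c(𝓕, U)` depends only on the isomorphism class of `U`, since a
copy of `U` inside another graph identifies the subgraphs of `U` with the subgraphs below the copy.
Sorting the subgraphs `U` by the representative `X ∈ R` of their class gives `Σ_X c(𝓕, X) s(X, G)`.
-/

lemma List.prod_map_natCard {ι α : Type*} (L : List ι) (p : ι → α → Prop) :
    (L.map fun x => Nat.card {a // p x a}).prod =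
      Nat.card {C : Fin L.length → α // ∀ i, p (L.get i) (C i)} := by
  conv_lhs => rw [← List.ofFn_get L, List.map_ofFn, List.prod_ofFn]
  rw [Nat.card_congr Equiv.subtypePiEquivPi, Nat.card_pi]
  rfl

lemma Nat.card_eq_sum_natCard_fiber {α β : Type*} [Finite α] [Fintype β] (P : α → Prop)
    (f : α → β) : Nat.card {a // P a} = ∑ b, Nat.card {a // P a ∧ f a = b} := by
  rw [← Nat.card_sigma]
  exact Nat.card_congr ((Equiv.sigmaFiberEquiv fun a : {a // P a} => f a).symm.trans
    (Equiv.sigmaCongrRight fun b => Equiv.subtypeSubtypeEquivSubtypeInter P (f · = b)))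

lemma Finset.sum_eq_sum_nsmul_natCard_of_existsUnique {α β M : Type*} [Fintype α]
    [AddCommMonoid M] (R : Finset β) (p : β → α → Prop) (f : α → M) (g : β → M)
    (hR : ∀ a, ∃! y, y ∈ R ∧ p y a) (hfg : ∀ y a, p y a → f a = g y) :
    ∑ a, f a = ∑ y ∈ R, Nat.card {a // p y a} • g y := by
  classical
  have hsingle (a : α) : f a = ∑ y ∈ R, if p y a then g y else 0 := by
    obtain ⟨y, ⟨hyR, hya⟩, huniq⟩ := hR a
    rw [Finset.sum_eq_single_of_mem y hyR fun z hzR hzy =>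
      if_neg fun hza => hzy (huniq z ⟨hzR, hza⟩), if_pos hya, hfg y a hya]
  rw [Finset.sum_congr rfl fun a _ => hsingle a, Finset.sum_comm]
  simp only [Finset.sum_ite, Finset.sum_const_zero, add_zero, Finset.sum_const,
    Nat.card_eq_fintype_card, Fintype.card_subtype]

namespace SimpleGraph

variable {V W : Type*} {A : SimpleGraph V} {B : SimpleGraph W}

namespace Subgraph

lemma gc_map_comap (f : A →g B) : GaloisConnection (Subgraph.map f) (Subgraph.comap f) :=
  map_le_iff_le_comap f

lemma map_iSup {ι : Sort*} (f : A →g B) (H : ι → A.Subgraph) :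
    (⨆ i, H i).map f = ⨆ i, (H i).map f :=
  (gc_map_comap f).l_iSup

lemma comap_map_of_injective_s2 {f : A →g B} (hf : Function.Injective f) (H : A.Subgraph) :
    (H.map f).comap f = H := by
  ext u v
  · simp [hf.mem_set_image]
  · simp only [comap_adj, map_adj, Relation.Map, hf.eq_iff, exists_eq_right_right, exists_eq_right]
    exact and_iff_right_of_imp fun h => H.adj_sub h

lemma map_comap_of_le_map_top {f : A →g B} {H : B.Subgraph} (h : H ≤ (⊤ : A.Subgraph).map f) :
    (H.comap f).map f = H := by
  refine le_antisymm ((gc_map_comap f).l_u_le H) ⟨fun x hx => ?_, fun x y hxy => ?_⟩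
  · obtain ⟨a, -, rfl⟩ := h.1 hx
    exact ⟨a, hx, rfl⟩
  · obtain ⟨a, b, hab, rfl, rfl⟩ := h.2 hxy
    exact ⟨a, b, ⟨hab, hxy⟩, rfl, rfl⟩

lemma coeCopy_toSubgraph (U : A.Subgraph) : U.coeCopy.toSubgraph = U := by
  ext x y
  · simp [coeCopy]
  · simp only [map_adj, Relation.Map, top_adj, coe_adj]
    exact ⟨by rintro ⟨a, b, h, rfl, rfl⟩; exact h,
      fun h => ⟨⟨x, U.edge_vert h⟩, ⟨y, U.edge_vert h.symm⟩, h, rfl, rfl⟩⟩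

end Subgraph

lemma Iso.toCopy_toSubgraph (e : A ≃g B) : e.toCopy.toSubgraph = ⊤ := by
  ext x y
  · simp [e.surjective.range_eq]
  · simp only [Subgraph.map_adj, Relation.Map, Subgraph.top_adj]
    exact ⟨by rintro ⟨a, b, h, rfl, rfl⟩; exact e.map_adj_iff.2 h,
      fun h => ⟨e.symm x, e.symm y, e.symm.map_adj_iff.2 h, e.apply_symm_apply x,
        e.apply_symm_apply y⟩⟩

def IsCover (L : GSeq) (C : Fin L.length → A.Subgraph) (U : A.Subgraph) : Prop :=
  (∀ i, Nonempty ((L.get i).2 ≃g (C i).coe)) ∧ ⨆ i, C i = U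

lemma IsCover.le {L : GSeq} {C : Fin L.length → A.Subgraph} {U : A.Subgraph} (h : IsCover L C U)
    (i : Fin L.length) : C i ≤ U :=
  (le_iSup C i).trans h.2.le

def Copy.isCoverEquiv (L : GSeq) (f : Copy A B) :
    {C : Fin L.length → A.Subgraph // IsCover L C ⊤} ≃
      {C : Fin L.length → B.Subgraph // IsCover L C f.toSubgraph} where
  toFun C := ⟨fun i => (C.1 i).map f.toHom,
    fun i => (C.2.1 i).map fun e => e.trans (f.isoSubgraphMap _),
    by rw [← Subgraph.map_iSup, C.2.2]⟩
  invFun C := ⟨fun i => (C.1 i).comap f.toHom, by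
    refine ⟨fun i => ?_, ?_⟩
    · have h := C.2.1 i
      rw [← Subgraph.map_comap_of_le_map_top (C.2.le i)] at h
      exact h.map fun e => e.trans (f.isoSubgraphMap _).symm
    · apply Function.LeftInverse.injective (Subgraph.comap_map_of_injective_s2 f.injective)
      rw [Subgraph.map_iSup]
      exact (iSup_congr fun i => Subgraph.map_comap_of_le_map_top (C.2.le i)).trans C.2.2⟩
  left_inv C := Subtype.ext (funext fun i => Subgraph.comap_map_of_injective_s2 f.injective _)
  right_inv C := Subtype.ext (funext fun i => Subgraph.map_comap_of_le_map_top (C.2.le i))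

lemma Iso.natCard_isCover_top (L : GSeq) (e : A ≃g B) :
    Nat.card {C : Fin L.length → A.Subgraph // IsCover L C ⊤} =
      Nat.card {C : Fin L.length → B.Subgraph // IsCover L C ⊤} := by
  rw [Nat.card_congr (e.toCopy.isCoverEquiv L), e.toCopy_toSubgraph]

lemma Subgraph.natCard_isCover (L : GSeq) (U : A.Subgraph) :
    Nat.card {C : Fin L.length → A.Subgraph // IsCover L C U} =
      Nat.card {C : Fin L.length → U.coe.Subgraph // IsCover L C ⊤} := by
  rw [Nat.card_congr (U.coeCopy.isCoverEquiv L), U.coeCopy_toSubgraph]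

lemma existsUnique_mem_iso_coe {n : ℕ} {G : SimpleGraph (Fin n)}
    {R : Finset (Σ k : ℕ, SimpleGraph (Fin k))}
    (hR : ∀ X : Σ k : ℕ, SimpleGraph (Fin k), X.1 ≤ n → ∃! Y, Y ∈ R ∧ Nonempty (X.2 ≃g Y.2))
    (U : G.Subgraph) : ∃! Y, Y ∈ R ∧ Nonempty (Y.2 ≃g U.coe) := by
  classical
  have hcard : Fintype.card U.verts ≤ n := by
    simpa using Fintype.card_le_of_injective _ (Subtype.val_injective (p := (· ∈ U.verts)))
  let e := U.coe.overFinIso rfl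
  refine (existsUnique_congr fun Y => and_congr_right fun _ => ?_).1
    (hR ⟨_, U.coe.overFin rfl⟩ hcard)
  exact ⟨fun ⟨i⟩ => ⟨(e.trans i).symm⟩, fun ⟨i⟩ => ⟨e.symm.trans i.symm⟩⟩

end SimpleGraph

theorem stmt_2_general {n : ℕ} (G : SimpleGraph (Fin n)) (L : GSeq)
    (R : Finset (Σ k : ℕ, SimpleGraph (Fin k)))
    (hR : ∀ X : Σ k : ℕ, SimpleGraph (Fin k), X.1 ≤ n →
      ∃! Y, Y ∈ R ∧ Nonempty (X.2 ≃g Y.2)) :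
    (L.map fun F => subCount F.2 G).prod =
      ∑ X ∈ R, coverCount L X.2 * subCount X.2 G := by
  classical
  calc (L.map fun F => subCount F.2 G).prod
      = Nat.card {C : Fin L.length → G.Subgraph // ∀ i, Nonempty ((L.get i).2 ≃g (C i).coe)} :=
        L.prod_map_natCard fun F (H : G.Subgraph) => Nonempty (F.2 ≃g H.coe)
    _ = ∑ U : G.Subgraph, Nat.card {C // IsCover L C U} := Nat.card_eq_sum_natCard_fiber _ _
    _ = ∑ U : G.Subgraph, Nat.card {C : Fin L.length → U.coe.Subgraph // IsCover L C ⊤} :=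
        Finset.sum_congr rfl fun U _ => U.natCard_isCover L
    _ = ∑ X ∈ R, subCount X.2 G • coverCount L X.2 :=
        Finset.sum_eq_sum_nsmul_natCard_of_existsUnique R _ _ _ (existsUnique_mem_iso_coe hR)
          fun _ _ ⟨e⟩ => (e.natCard_isCover_top L).symm
    _ = ∑ X ∈ R, coverCount L X.2 * subCount X.2 G := by simp only [smul_eq_mul, mul_comm]

/-- The counting identity underlying Kocay's lemma: for any `n`-vertex graph `G`
and any finite sequence `L = (F_1, …, F_m)` of graphs,
`∏ i, s(F_i, G) = Σ_X c(L, X) · s(X, G)`, where the sum ranges over all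
isomorphism classes of graphs on at most `n` vertices (represented by a
transversal `R` containing exactly one representative of each such class). -/
theorem stmt_2 {n : ℕ} (G : SimpleGraph (Fin n)) (L : GSeq)
    (R : Finset (Σ k : ℕ, SimpleGraph (Fin k)))
    (hRle : ∀ Y ∈ R, Y.1 ≤ n)
    (hR : ∀ X : Σ k : ℕ, SimpleGraph (Fin k), X.1 ≤ n →
      ∃! Y, Y ∈ R ∧ Nonempty (X.2 ≃g Y.2)) :
    (L.map fun F => subCount F.2 G).prod =
      ∑ X ∈ R, coverCount L X.2 * subCount X.2 G :=
  stmt_2_general G L R hR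
end

section
/- Let n ≥ 1 and let 𝓕 = (F_1, …, F_m) be a finite sequence of simple graphs, each with fewer than n vertices. If G and G' are n-vertex simple graphs and G' is a reconstruction of G, then Σ_H c(𝓕, H) · s(H, G') = Σ_H c(𝓕, H) · s(H, G), where each sum is over all isomorphism classes H of n-vertex simple graphs. -/
open SimpleGraph

/-!
Count the tuples `(C_1, …, C_m)` of subgraphs of `G` with `C_i ≅ F_i` in two ways: there are
`∏ s(F_i, G)` of them, and grouping them by their union `K` gives `Σ_K c(𝓕, K)`. Split the latter
sum by the number `k` of vertices of `K`; the part `k = n` is `Σ_H c(𝓕, H) s(H, G)`. For `k < n`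
Kelly's argument applies: a `k`-vertex subgraph lies in exactly `n - k` of the graphs `G - v`, so
for every isomorphism invariant `φ` the sum `Σ_{|K| = k} φ(K)` is determined by the multiset of
the `G - v`, hence is the same for `G` and `G'`. With `φ = [F ≅ ·]` this makes every `s(F_i, G)`
reconstructible as well, and therefore also the part `k = n`.
-/

namespace SimpleGraph

open Finset
open scoped Classical

universe u

section Transport

variable {α β : Type*} {A : SimpleGraph α} {B : SimpleGraph β}

theorem Subgraph.map_iSup_s3 {ι : Sort*} (f : A →g B) (C : ι → A.Subgraph) :
    (⨆ i, C i).map f = ⨆ i, (C i).map f :=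
  GaloisConnection.l_iSup fun _ _ ↦ Subgraph.map_le_iff_le_comap f _ _

namespace Copy

variable (f : Copy A B)

theorem comap_map (K : A.Subgraph) : (K.map f.toHom).comap f.toHom = K := by
  have hf : Function.Injective f := f.injective
  ext a b
  · simp [hf.eq_iff]
  · simpa [Relation.Map, hf.eq_iff] using fun h ↦ K.adj_sub h

theorem map_injective : Function.Injective (Subgraph.map f.toHom) :=
  Function.LeftInverse.injective f.comap_map

theorem map_comap {K : B.Subgraph} (hK : K ≤ f.toSubgraph) :
    (K.comap f.toHom).map f.toHom = K := by
  refine le_antisymm ((Subgraph.map_le_iff_le_comap _ _ _).2 le_rfl) ⟨?_, ?_⟩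
  · intro b hb
    obtain ⟨a, -, rfl⟩ := hK.1 hb
    exact ⟨a, hb, rfl⟩
  · intro b b' h
    obtain ⟨a, a', ha, rfl, rfl⟩ := hK.2 h
    exact ⟨a, a', ⟨ha, h⟩, rfl, rfl⟩

theorem nonempty_iso_map_iff {γ : Type*} {F : SimpleGraph γ} (K : A.Subgraph) :
    Nonempty (F ≃g (K.map f.toHom).coe) ↔ Nonempty (F ≃g K.coe) :=
  ⟨fun ⟨e⟩ ↦ ⟨e.trans (f.isoSubgraphMap K).symm⟩, fun ⟨e⟩ ↦ ⟨e.trans (f.isoSubgraphMap K)⟩⟩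

theorem ncard_verts_map (K : A.Subgraph) : (K.map f.toHom).verts.ncard = K.verts.ncard :=
  Set.ncard_image_of_injective _ f.injective

def subgraphEquiv : A.Subgraph ≃ {K : B.Subgraph // K ≤ f.toSubgraph} where
  toFun K := ⟨K.map f.toHom, Subgraph.map_mono le_top⟩
  invFun K := K.1.comap f.toHom
  left_inv := f.comap_map
  right_inv K := Subtype.ext (f.map_comap K.2)

theorem le_toSubgraph_induce_iff {V : Type*} {G : SimpleGraph V} {s : Set V}
    {K : G.Subgraph} : K ≤ (Copy.induce G s).toSubgraph ↔ K.verts ⊆ s := by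
  refine ⟨fun h v hv ↦ ?_, fun h ↦ ⟨fun v hv ↦ ?_, fun v w hvw ↦ ?_⟩⟩
  · obtain ⟨⟨v, hvs⟩, -, rfl⟩ := h.1 hv
    exact hvs
  · exact ⟨⟨v, h hv⟩, trivial, rfl⟩
  · exact ⟨⟨v, h (K.edge_vert hvw)⟩, ⟨w, h (K.edge_vert hvw.symm)⟩, K.adj_sub hvw, rfl, rfl⟩

end Copy

end Transport

section Kelly

def IsGraphInvariant (φ : ∀ W : Type u, SimpleGraph W → ℕ) : Prop :=
  ∀ ⦃W W' : Type u⦄ ⦃X : SimpleGraph W⦄ ⦃Y : SimpleGraph W'⦄, X ≃g Y → φ W X = φ W' Y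

variable {φ : ∀ W : Type u, SimpleGraph W → ℕ}

noncomputable def levelSum (φ : ∀ W : Type u, SimpleGraph W → ℕ) (k : ℕ) {V : Type u}
    [Fintype V] [DecidableEq V] (G : SimpleGraph V) : ℕ :=
  ∑ K : G.Subgraph with K.verts.ncard = k, φ _ K.coe

variable {α β : Type u} [Fintype α] [DecidableEq α] [Fintype β] [DecidableEq β]
  {A : SimpleGraph α} {B : SimpleGraph β}

theorem Copy.levelSum_eq (hφ : IsGraphInvariant φ) (f : Copy A B) (k : ℕ) :
    levelSum φ k A =
      ∑ K : B.Subgraph with K ≤ f.toSubgraph ∧ K.verts.ncard = k, φ _ K.coe := by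
  let ψ : B.Subgraph → ℕ := fun K ↦ if K.verts.ncard = k then φ _ K.coe else 0
  calc levelSum φ k A = ∑ K : A.Subgraph, ψ (K.map f.toHom) := by
        rw [levelSum, sum_filter]
        refine sum_congr rfl fun K _ ↦ ?_
        simp only [ψ, f.ncard_verts_map, hφ (f.isoSubgraphMap K)]
    _ = ∑ K : {K : B.Subgraph // K ≤ f.toSubgraph}, ψ K :=
        Fintype.sum_equiv f.subgraphEquiv _ _ fun _ ↦ rfl
    _ = ∑ K : B.Subgraph with K ≤ f.toSubgraph, ψ K := (sum_subtype _ (by simp) _).symm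
    _ = _ := by rw [← sum_filter, filter_filter]

theorem levelSum_congr (hφ : IsGraphInvariant φ) (e : A ≃g B) (k : ℕ) :
    levelSum φ k A = levelSum φ k B := by
  rw [e.toCopy.levelSum_eq hφ, levelSum,
    show e.toCopy.toSubgraph = ⊤ from Subgraph.map_iso_top e]
  simp

theorem card_filter_notMem_verts (K : A.Subgraph) :
    #{a | a ∉ K.verts} = Fintype.card α - K.verts.ncard := by
  rw [filter_not, card_sdiff_of_subset (filter_subset _ _), card_univ,
    Set.ncard_eq_toFinset_card']
  congr 2
  ext
  simp

/-- Kelly's lemma: a subgraph with `k` vertices misses exactly `|V| - k` vertices. -/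
theorem card_sub_mul_levelSum (hφ : IsGraphInvariant φ) (A : SimpleGraph α) (k : ℕ) :
    (Fintype.card α - k) * levelSum φ k A = ∑ a, levelSum φ k (A.induce {a}ᶜ) := by
  simp_rw [(Copy.induce A _).levelSum_eq hφ, Copy.le_toSubgraph_induce_iff,
    Set.subset_compl_singleton_iff]
  rw [levelSum, mul_sum, sum_comm' (t' := univ.filter fun K : A.Subgraph ↦ K.verts.ncard = k)
    (s' := fun K ↦ univ.filter (· ∉ K.verts)) (by simp)]
  refine sum_congr rfl fun K hK ↦ ?_
  rw [sum_const, card_filter_notMem_verts, (mem_filter.1 hK).2, smul_eq_mul]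

theorem levelSum_eq_of_isReconstruction {n k : ℕ} {φ : ∀ W : Type, SimpleGraph W → ℕ}
    (hφ : IsGraphInvariant φ) (hk : k < n) {G G' : SimpleGraph (Fin n)}
    (h : IsReconstruction G G') : levelSum φ k G = levelSum φ k G' := by
  obtain ⟨f, hf⟩ := h
  refine Nat.eq_of_mul_eq_mul_left (Nat.sub_pos_of_lt hk) ?_
  have kelly := card_sub_mul_levelSum (α := Fin n) hφ (k := k)
  simp only [Fintype.card_fin] at kelly
  calc (n - k) * levelSum φ k G = ∑ v, levelSum φ k (vdel G v) := kelly G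
    _ = ∑ v, levelSum φ k (vdel G' (f v)) :=
        sum_congr rfl fun v _ ↦ levelSum_congr hφ (hf v).some k
    _ = ∑ v, levelSum φ k (vdel G' v) := f.sum_comp fun v ↦ levelSum φ k (vdel G' v)
    _ = (n - k) * levelSum φ k G' := (kelly G').symm

end Kelly

section Covers

variable {α β : Type*} {A : SimpleGraph α} {B : SimpleGraph β}

def covers (L : GSeq) (X : A.Subgraph) : Set (Fin L.length → A.Subgraph) :=
  {C | (∀ i, Nonempty ((L.get i).2 ≃g (C i).coe)) ∧ ⨆ i, C i = X}

noncomputable def numCovers (L : GSeq) (A : SimpleGraph α) : ℕ :=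
  Nat.card (covers L (⊤ : A.Subgraph))

theorem numCovers_eq_coverCount {n : ℕ} (L : GSeq) (G : SimpleGraph (Fin n)) :
    numCovers L G = coverCount L G :=
  rfl

def Copy.coversEquiv (f : Copy A B) (L : GSeq) (X : A.Subgraph) :
    covers L X ≃ covers L (X.map f.toHom) where
  toFun C := ⟨fun i ↦ (C.1 i).map f.toHom, fun i ↦ (f.nonempty_iso_map_iff _).2 (C.2.1 i),
    by rw [← Subgraph.map_iSup_s3, C.2.2]⟩
  invFun D :=
    have hD i : D.1 i ≤ f.toSubgraph :=
      (le_iSup D.1 i).trans (D.2.2.le.trans (Subgraph.map_mono le_top))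
    ⟨fun i ↦ (D.1 i).comap f.toHom,
      fun i ↦ (f.nonempty_iso_map_iff _).1 (f.map_comap (hD i) ▸ D.2.1 i),
      f.map_injective <| by simp only [Subgraph.map_iSup_s3, f.map_comap (hD _), D.2.2]⟩
  left_inv C := Subtype.ext <| funext fun i ↦ f.comap_map (C.1 i)
  right_inv D := Subtype.ext <| funext fun i ↦
    f.map_comap <| (le_iSup D.1 i).trans (D.2.2.le.trans (Subgraph.map_mono le_top))

theorem numCovers_congr (e : A ≃g B) (L : GSeq) : numCovers L A = numCovers L B := by
  rw [numCovers, Nat.card_congr (e.toCopy.coversEquiv L ⊤)]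
  exact congrArg (fun X ↦ Nat.card (covers L X)) (Subgraph.map_iso_top e)

theorem card_covers_eq_numCovers (L : GSeq) (K : A.Subgraph) :
    Nat.card (covers L K) = numCovers L K.coe := by
  rw [numCovers, Nat.card_congr (K.coeCopy.coversEquiv L ⊤)]
  exact congrArg (fun X ↦ Nat.card (covers L X)) (Subgraph.map_hom_top K).symm

theorem prod_card_copies_eq_sum_numCovers [Fintype α] [DecidableEq α] (L : GSeq)
    (A : SimpleGraph α) :
    ∏ i, Nat.card {K : A.Subgraph // Nonempty ((L.get i).2 ≃g K.coe)} =
      ∑ K : A.Subgraph, numCovers L K.coe := by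
  let byUnion : {C : Fin L.length → A.Subgraph // ∀ i, Nonempty ((L.get i).2 ≃g (C i).coe)} ≃
      Σ K : A.Subgraph, covers L K :=
    { toFun C := ⟨⨆ i, C.1 i, C.1, C.2, rfl⟩
      invFun C := ⟨C.2.1, C.2.2.1⟩
      left_inv _ := rfl
      right_inv := by rintro ⟨K, C, hC, rfl⟩; rfl }
  rw [← Nat.card_pi, ← Nat.card_congr Equiv.subtypePiEquivPi, Nat.card_congr byUnion,
    Nat.card_sigma]
  simp only [card_covers_eq_numCovers]

theorem isGraphInvariant_numCovers (L : GSeq) : IsGraphInvariant fun _ X ↦ numCovers L X :=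
  fun _ _ _ _ e ↦ numCovers_congr e L

theorem sum_numCovers_eq_sum_levelSum [Fintype α] [DecidableEq α] (L : GSeq)
    (A : SimpleGraph α) :
    ∑ K : A.Subgraph, numCovers L K.coe =
      ∑ k ∈ range (Fintype.card α + 1), levelSum (fun _ X ↦ numCovers L X) k A :=
  (sum_fiberwise_of_maps_to (fun K _ ↦ mem_range.2 (Nat.lt_succ_of_le
    ((Set.ncard_le_ncard (Set.subset_univ K.verts)).trans_eq
      (by rw [Set.ncard_univ, Nat.card_eq_fintype_card])))) _).symm

end Covers

section Copies

variable {α : Type*} {A : SimpleGraph α}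

theorem ncard_verts_of_iso {k : ℕ} {F : SimpleGraph (Fin k)} {K : A.Subgraph}
    (e : F ≃g K.coe) : K.verts.ncard = k := by
  rw [← Nat.card_coe_set_eq, ← Nat.card_congr e.toEquiv, Nat.card_eq_fintype_card,
    Fintype.card_fin]

theorem Subgraph.isSpanning_of_ncard_verts [Fintype α] {K : A.Subgraph}
    (h : K.verts.ncard = Fintype.card α) : K.IsSpanning := by
  have : K.verts = Set.univ := Set.eq_of_subset_of_ncard_le (Set.subset_univ _)
    (by rw [h, Set.ncard_univ, Nat.card_eq_fintype_card])
  exact fun v ↦ this ▸ Set.mem_univ v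

theorem isGraphInvariant_nonempty_iso {k : ℕ} (F : SimpleGraph (Fin k)) :
    IsGraphInvariant fun _ X ↦ if Nonempty (F ≃g X) then 1 else 0 := by
  intro W W' X Y e
  have : Nonempty (F ≃g X) ↔ Nonempty (F ≃g Y) := Nonempty.congr (·.trans e) (·.trans e.symm)
  simp only [this]

theorem card_copies_eq_levelSum [Fintype α] [DecidableEq α] {k : ℕ} (F : SimpleGraph (Fin k))
    (A : SimpleGraph α) :
    Nat.card {K : A.Subgraph // Nonempty (F ≃g K.coe)} =
      levelSum (fun _ X ↦ if Nonempty (F ≃g X) then 1 else 0) k A := by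
  rw [levelSum, sum_boole, Nat.card_eq_fintype_card, Fintype.card_subtype, filter_filter]
  congr 1
  exact filter_congr fun K _ ↦ ⟨fun ⟨e⟩ ↦ ⟨ncard_verts_of_iso e, ⟨e⟩⟩, And.right⟩

theorem subCount_eq_of_isReconstruction {n k : ℕ} (hk : k < n) (F : SimpleGraph (Fin k))
    {G G' : SimpleGraph (Fin n)} (h : IsReconstruction G G') :
    subCount F G = subCount F G' := by
  simp only [subCount, card_copies_eq_levelSum]
  exact levelSum_eq_of_isReconstruction (isGraphInvariant_nonempty_iso F) hk h

theorem sum_coverCount_mul_subCount {n : ℕ} (L : GSeq) (R : Finset (SimpleGraph (Fin n)))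
    (hR : ∀ X : SimpleGraph (Fin n), ∃! Y, Y ∈ R ∧ Nonempty (X ≃g Y))
    (G : SimpleGraph (Fin n)) :
    ∑ H ∈ R, coverCount L H * subCount H G = levelSum (fun _ X ↦ numCovers L X) n G := by
  -- `K.spanningCoe` is a graph on `Fin n`; for `n`-vertex `K` it is isomorphic to `K.coe`.
  choose rep hrepR hrepIso using fun K : G.Subgraph ↦ (hR K.spanningCoe).exists
  have fiber_iff : ∀ H ∈ R, ∀ K : G.Subgraph,
      K.verts.ncard = n ∧ rep K = H ↔ Nonempty (H ≃g K.coe) := by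
    intro H hH K
    constructor
    · rintro ⟨hK, rfl⟩
      have hspan := Subgraph.isSpanning_of_ncard_verts (hK.trans (Fintype.card_fin n).symm)
      exact ⟨(hrepIso K).some.symm.trans (K.spanningCoeEquivCoeOfSpanning hspan)⟩
    · rintro ⟨e⟩
      have hK := ncard_verts_of_iso e
      have hspan := Subgraph.isSpanning_of_ncard_verts (hK.trans (Fintype.card_fin n).symm)
      exact ⟨hK, (hR K.spanningCoe).unique ⟨hrepR K, hrepIso K⟩
        ⟨hH, ⟨(K.spanningCoeEquivCoeOfSpanning hspan).trans e.symm⟩⟩⟩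
  rw [levelSum, ← sum_fiberwise_of_maps_to (g := rep) fun K _ ↦ hrepR K]
  refine sum_congr rfl fun H hH ↦ ?_
  rw [filter_filter, filter_congr fun K _ ↦ fiber_iff H hH K,
    sum_congr rfl fun K hK ↦ numCovers_congr (mem_filter.1 hK).2.some.symm L, sum_const,
    smul_eq_mul, mul_comm, numCovers_eq_coverCount, subCount, Nat.card_eq_fintype_card,
    Fintype.card_subtype]

end Copies

end SimpleGraph

open Finset

theorem stmt_3_general {n : ℕ} (L : GSeq) (hL : ∀ F ∈ L, F.1 < n)
    (G G' : SimpleGraph (Fin n)) (hrec : IsReconstruction G G')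
    (R : Finset (SimpleGraph (Fin n)))
    (hR : ∀ X : SimpleGraph (Fin n), ∃! Y, Y ∈ R ∧ Nonempty (X ≃g Y)) :
    ∑ H ∈ R, coverCount L H * subCount H G' =
      ∑ H ∈ R, coverCount L H * subCount H G := by
  have kocay : ∀ X : SimpleGraph (Fin n), ∏ i, subCount (L.get i).2 X =
      ∑ k ∈ range n, levelSum (fun _ Y ↦ numCovers L Y) k X +
        ∑ H ∈ R, coverCount L H * subCount H X := fun X ↦ by
    rw [sum_coverCount_mul_subCount L R hR, ← sum_range_succ]
    have h := (prod_card_copies_eq_sum_numCovers L X).trans (sum_numCovers_eq_sum_levelSum L X)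
    rwa [Fintype.card_fin] at h
  have prod_eq : ∏ i, subCount (L.get i).2 G = ∏ i, subCount (L.get i).2 G' :=
    prod_congr rfl fun i _ ↦ subCount_eq_of_isReconstruction (hL _ (L.get_mem i)) _ hrec
  have low_eq : ∑ k ∈ range n, levelSum (fun _ Y ↦ numCovers L Y) k G =
      ∑ k ∈ range n, levelSum (fun _ Y ↦ numCovers L Y) k G' :=
    sum_congr rfl fun k hk ↦
      levelSum_eq_of_isReconstruction (isGraphInvariant_numCovers L) (mem_range.1 hk) hrec
  have := kocay G
  have := kocay G'
  omega

/-- **Kocay's lemma.** Let `n ≥ 1` and `L = (F_1, …, F_m)` a sequence of graphs,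
each with fewer than `n` vertices. If `G'` is a reconstruction of the `n`-vertex
graph `G`, then `Σ_H c(L,H)·s(H,G') = Σ_H c(L,H)·s(H,G)`, where the sums range
over all isomorphism classes of `n`-vertex graphs (represented by a transversal
`R` containing exactly one representative of each isomorphism class). -/
theorem stmt_3 {n : ℕ} (hn : 1 ≤ n) (L : GSeq) (hL : ∀ F ∈ L, F.1 < n)
    (G G' : SimpleGraph (Fin n)) (hrec : IsReconstruction G G')
    (R : Finset (SimpleGraph (Fin n)))
    (hR : ∀ X : SimpleGraph (Fin n), ∃! Y, Y ∈ R ∧ Nonempty (X ≃g Y)) :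
    ∑ H ∈ R, coverCount L H * subCount H G' =
      ∑ H ∈ R, coverCount L H * subCount H G :=
  stmt_3_general L hL G G' hrec R hR
end

section
/- Let n ≥ 3 and let C be a class of n-vertex simple graphs that is closed under isomorphism, recognisable, and satisfies Kocay's lemma for a finite family 𝔉 = (𝓕_1, …, 𝓕_l) of finite sequences of simple graphs each with fewer than n vertices. Let M be the real matrix with rows indexed by the sequences in 𝔉 and columns indexed by the isomorphism classes of graphs in C, whose (𝓕, [H]) entry is the covering number c(𝓕, H). Let W = { x ∈ ℝ^{C/≅} : M·x = 0 } be the null space of M. Then dim(W) ≥ |C/≅| − |C/∼|, i.e., the dimension of W is at least the number of isomorphism classes of graphs in C minus the number of equivalence classes of C under the reconstruction relation ∼. -/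
open SimpleGraph

/-- `R` is a transversal of the isomorphism classes of graphs in `C`:
it contains exactly one representative of each isomorphism class in `C`. -/
def IsIsoTransversal {n : ℕ} (C : Set (SimpleGraph (Fin n)))
    (R : Finset (SimpleGraph (Fin n))) : Prop :=
  ↑R ⊆ C ∧ ∀ G ∈ C, ∃! H, H ∈ R ∧ Nonempty (G ≃g H)

/-- `D` is a transversal of the reconstruction classes of graphs in `C`:
it contains exactly one representative of each `∼`-equivalence class in `C`. -/
def IsReconTransversal {n : ℕ} (C : Set (SimpleGraph (Fin n)))
    (D : Finset (SimpleGraph (Fin n))) : Prop :=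
  ↑D ⊆ C ∧ ∀ G ∈ C, ∃! H, H ∈ D ∧ IsReconstruction G H

set_option maxHeartbeats 1000000

/- ====== auxiliary lemmas ====== -/

instance subgraphFinite {V : Type*} [Finite V] (G : SimpleGraph V) :
    Finite G.Subgraph := by
  have hinj : Function.Injective (fun H : G.Subgraph => (H.verts, H.Adj)) := by
    intro H K h
    exact SimpleGraph.Subgraph.ext (congrArg Prod.fst h) (congrArg Prod.snd h)
  exact Finite.of_injective _ hinj

/-- The coe of the image of a subgraph under an isomorphism is isomorphic to the coe. -/
noncomputable def isoCoeMap {V W : Type*} {G : SimpleGraph V} {G' : SimpleGraph W}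
    (e : G ≃g G') (K : G.Subgraph) : K.coe ≃g (K.map e.toHom).coe where
  toFun v := ⟨e v.1, ⟨v.1, v.2, rfl⟩⟩
  invFun w := ⟨e.symm w.1, by
    obtain ⟨u, hu, h⟩ := w.2
    have : e.symm w.1 = u := by rw [← h]; exact e.symm_apply_apply u
    rw [this]; exact hu⟩
  left_inv v := Subtype.ext (e.symm_apply_apply v.1)
  right_inv w := Subtype.ext (e.apply_symm_apply w.1)
  map_rel_iff' := by
    rintro ⟨u, hu⟩ ⟨v, hv⟩
    simp only [Equiv.coe_fn_mk, SimpleGraph.Subgraph.coe_adj, SimpleGraph.Subgraph.map_adj]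
    constructor
    · rintro ⟨a, b, hab, ha, hb⟩
      have ha' : a = u := e.injective ha
      have hb' : b = v := e.injective hb
      rwa [ha', hb'] at hab
    · intro h; exact ⟨u, v, h, rfl, rfl⟩

lemma subCount_iso_right {k n : ℕ} (F : SimpleGraph (Fin k)) {G G' : SimpleGraph (Fin n)}
    (e : G ≃g G') : subCount F G = subCount F G' := by
  apply Nat.card_congr
  have hcomp : ∀ {V₁ V₂ : Type} {A : SimpleGraph V₁} {B : SimpleGraph V₂}
      (f : A ≃g B) (K : A.Subgraph), (K.map f.toHom).map f.symm.toHom = K := by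
    intro V₁ V₂ A B f K
    rw [← SimpleGraph.Subgraph.map_comp]
    have : f.symm.toHom.comp f.toHom = SimpleGraph.Hom.id := by
      ext v; simp
    rw [this, SimpleGraph.Subgraph.map_id]
  exact
    { toFun := fun K => ⟨K.1.map e.toHom, K.2.map fun φ => φ.trans (isoCoeMap e K.1)⟩
      invFun := fun K => ⟨K.1.map e.symm.toHom, K.2.map fun φ => φ.trans (isoCoeMap e.symm K.1)⟩
      left_inv := fun K => Subtype.ext (hcomp e K.1)
      right_inv := fun K => Subtype.ext (hcomp e.symm K.1) }

lemma one_le_subCount_self {n : ℕ} (G : SimpleGraph (Fin n)) : 1 ≤ subCount G G := by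
  have hne : Nonempty {H : G.Subgraph // Nonempty (G ≃g H.coe)} :=
    ⟨⟨⊤, ⟨(SimpleGraph.Subgraph.topIso).symm⟩⟩⟩
  exact Nat.one_le_iff_ne_zero.mpr (Nat.card_ne_zero.mpr ⟨hne, inferInstance⟩)

lemma subCount_edge_bound {n : ℕ} {H G : SimpleGraph (Fin n)} (h : subCount H G ≠ 0) :
    Nat.card H.edgeSet ≤ Nat.card G.edgeSet ∧
      (Nat.card G.edgeSet ≤ Nat.card H.edgeSet → Nonempty (H ≃g G)) := by
  obtain ⟨⟨K, ⟨φ⟩⟩⟩ := (Nat.card_ne_zero.mp h).1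
  -- K is spanning
  have hcardv : Nat.card K.verts = n := by
    rw [← Nat.card_congr φ.toEquiv]
    simp
  have hverts : K.verts = Set.univ := by
    refine Set.eq_of_subset_of_ncard_le (Set.subset_univ _) ?_ (Set.toFinite _)
    rw [Set.ncard_univ, ← Nat.card_coe_set_eq, hcardv]
    simp
  have hsp : K.IsSpanning := SimpleGraph.Subgraph.isSpanning_iff.mpr hverts
  have χ : H ≃g K.spanningCoe := φ.trans (K.spanningCoeEquivCoeOfSpanning hsp).symm
  have hE : Nat.card H.edgeSet = Nat.card K.spanningCoe.edgeSet :=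
    Nat.card_congr χ.mapEdgeSet
  have hsub : K.spanningCoe.edgeSet ⊆ G.edgeSet :=
    SimpleGraph.edgeSet_mono K.spanningCoe_le
  have hle : Nat.card K.spanningCoe.edgeSet ≤ Nat.card G.edgeSet := by
    rw [Nat.card_coe_set_eq, Nat.card_coe_set_eq]
    exact Set.ncard_le_ncard hsub (Set.toFinite _)
  refine ⟨hE ▸ hle, fun hge => ?_⟩
  have heq : K.spanningCoe.edgeSet = G.edgeSet := by
    refine Set.eq_of_subset_of_ncard_le hsub ?_ (Set.toFinite _)
    rw [← Nat.card_coe_set_eq, ← Nat.card_coe_set_eq, ← hE]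
    exact hge
  have : K.spanningCoe = G := SimpleGraph.edgeSet_inj.mp heq
  exact ⟨this ▸ χ⟩

lemma sVec_linearIndependent {n : ℕ} (C : Set (SimpleGraph (Fin n)))
    (R : Finset (SimpleGraph (Fin n))) (hR : IsIsoTransversal C R) :
    LinearIndependent ℝ (fun G : ↥R => fun H : ↥R =>
      (subCount (H : SimpleGraph (Fin n)) (G : SimpleGraph (Fin n)) : ℝ)) := by
  classical
  have hRinj : ∀ H1 ∈ R, ∀ H2 ∈ R, Nonempty (H1 ≃g H2) → H1 = H2 := by
    intro H1 h1 H2 h2 hiso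
    obtain ⟨H0, _, huniq⟩ := hR.2 H1 (hR.1 h1)
    rw [huniq H1 ⟨h1, ⟨SimpleGraph.Iso.refl⟩⟩, huniq H2 ⟨h2, hiso⟩]
  rw [Fintype.linearIndependent_iff]
  intro g hg
  by_contra hcon
  push_neg at hcon
  obtain ⟨i0, hi0⟩ := hcon
  set T : Finset ↥R := Finset.univ.filter (fun j => g j ≠ 0) with hT
  have hTne : T.Nonempty := ⟨i0, by simp [hT, hi0]⟩
  obtain ⟨Gm, hGmT, hmax⟩ :=
    T.exists_max_image (fun j => Nat.card (j : SimpleGraph (Fin n)).edgeSet) hTne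
  have hgGm : g Gm ≠ 0 := (Finset.mem_filter.mp hGmT).2
  have hsum := congrFun hg Gm
  rw [Finset.sum_apply] at hsum
  simp only [Pi.smul_apply, smul_eq_mul, Pi.zero_apply] at hsum
  have hsingle : ∑ j : ↥R, g j * (subCount (Gm : SimpleGraph (Fin n)) (j : SimpleGraph (Fin n)) : ℝ)
      = g Gm * (subCount (Gm : SimpleGraph (Fin n)) (Gm : SimpleGraph (Fin n)) : ℝ) := by
    refine Finset.sum_eq_single Gm ?_ (by simp)
    intro j _ hjne
    by_cases hgj : g j = 0
    · rw [hgj, zero_mul]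
    · have hjT : j ∈ T := by simp [hT, hgj]
      have hjle := hmax j hjT
      by_cases hsc : subCount (Gm : SimpleGraph (Fin n)) (j : SimpleGraph (Fin n)) = 0
      · rw [hsc]; simp
      · exfalso
        obtain ⟨hle, heq⟩ := subCount_edge_bound hsc
        have hiso := heq (le_antisymm hjle hle ▸ le_refl _)
        exact hjne (Subtype.ext (hRinj _ Gm.2 _ j.2 hiso)).symm
  rw [hsingle] at hsum
  have hpos : (0 : ℝ) < (subCount (Gm : SimpleGraph (Fin n)) (Gm : SimpleGraph (Fin n)) : ℝ) := by
    exact_mod_cast one_le_subCount_self (Gm : SimpleGraph (Fin n))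
  exact hgGm (by
    rcases mul_eq_zero.mp hsum with h | h
    · exact h
    · exact absurd h (ne_of_gt hpos))


/-- Let `n ≥ 3` and let `C` be a class of `n`-vertex graphs closed under
isomorphism, recognisable, and satisfying Kocay's lemma for a finite family
`𝔉 = (L_1, …, L_l)` of sequences of graphs with fewer than `n` vertices. Let `M`
be the matrix of covering numbers `c(L_i, H)`, with rows indexed by `Fin l` and
columns indexed by the isomorphism classes of graphs in `C` (a transversal `R`),
and let `W` be its null space. Then `dim W ≥ |C/≅| − |C/∼|`, where `|C/≅| =
R.card` and `|C/∼| = D.card` for any transversal `D` of the reconstruction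
classes of `C`. -/
theorem stmt_5 {n l : ℕ} (hn : 3 ≤ n) (C : Set (SimpleGraph (Fin n)))
    (hiso : ∀ G ∈ C, ∀ H, Nonempty (G ≃g H) → H ∈ C)
    (hrecog : ∀ G ∈ C, ∀ H, IsReconstruction G H → H ∈ C)
    (𝔉 : Fin l → GSeq) (h𝔉 : ∀ i : Fin l, ∀ F ∈ 𝔉 i, F.1 < n)
    (R : Finset (SimpleGraph (Fin n))) (hR : IsIsoTransversal C R)
    (hKocay : ∀ i : Fin l, ∀ G ∈ C, ∀ G' ∈ C, IsReconstruction G G' →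
      ∑ H ∈ R, coverCount (𝔉 i) H * subCount H G' =
        ∑ H ∈ R, coverCount (𝔉 i) H * subCount H G)
    (D : Finset (SimpleGraph (Fin n))) (hD : IsReconTransversal C D) :
    R.card - D.card ≤
      Module.finrank ℝ
        (LinearMap.ker (Matrix.of fun (i : Fin l) (H : ↥R) =>
          ((coverCount (𝔉 i) (H : SimpleGraph (Fin n)) : ℝ))).mulVecLin) := by
  classical
  set M : Matrix (Fin l) ↥R ℝ :=
    Matrix.of fun (i : Fin l) (H : ↥R) =>
      ((coverCount (𝔉 i) (H : SimpleGraph (Fin n)) : ℝ)) with hM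
  set sVec : SimpleGraph (Fin n) → (↥R → ℝ) :=
    fun G H => (subCount (H : SimpleGraph (Fin n)) G : ℝ) with hsVec
  -- reconstruction representatives
  choose dRep hdD hdRec using fun (G : ↥R) => (hD.2 (G : SimpleGraph (Fin n)) (hR.1 G.2)).exists
  -- iso representatives
  choose rRep hrR hrIso using fun (H : ↥D) => (hR.2 (H : SimpleGraph (Fin n)) (hD.1 H.2)).exists
  set t : ↥R → ↥R := fun G => ⟨rRep ⟨dRep G, hdD G⟩, hrR ⟨dRep G, hdD G⟩⟩ with ht
  -- the difference vectors lie in the kernel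
  have hmem : ∀ Gr : ↥R, (sVec (dRep Gr) - sVec (Gr : SimpleGraph (Fin n)))
      ∈ LinearMap.ker M.mulVecLin := by
    intro Gr
    rw [LinearMap.mem_ker]
    have e1 : ∀ (j : Fin l) (X : SimpleGraph (Fin n)),
        ∑ H : ↥R, (coverCount (𝔉 j) (H : SimpleGraph (Fin n)) : ℝ) *
            (subCount (H : SimpleGraph (Fin n)) X : ℝ)
          = ((∑ H ∈ R, coverCount (𝔉 j) H * subCount H X : ℕ) : ℝ) := by
      intro j X
      rw [← Finset.sum_coe_sort R (fun H => coverCount (𝔉 j) H * subCount H X)]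
      push_cast
      rfl
    have key : M.mulVecLin (sVec (dRep Gr) - sVec (Gr : SimpleGraph (Fin n))) =
        fun j => ∑ H : ↥R, (coverCount (𝔉 j) (H : SimpleGraph (Fin n)) : ℝ) *
          (sVec (dRep Gr) H - sVec (Gr : SimpleGraph (Fin n)) H) := by
      funext j
      simp [Matrix.mulVecLin_apply, Matrix.mulVec, dotProduct, hM]
    rw [key]
    funext j
    have hK := hKocay j (Gr : SimpleGraph (Fin n)) (hR.1 Gr.2) (dRep Gr)
      (hD.1 (hdD Gr)) (hdRec Gr)
    simp only [hsVec, mul_sub, Finset.sum_sub_distrib, Pi.zero_apply]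
    rw [e1 j (dRep Gr), e1 j (Gr : SimpleGraph (Fin n)), hK, sub_self]
  -- independence of the s-vectors
  have hfInd := sVec_linearIndependent C R hR
  -- f G = sVec ↑G
  set f : ↥R → (↥R → ℝ) := fun G => sVec (G : SimpleGraph (Fin n)) with hf
  have hft : ∀ G : ↥R, f (t G) = sVec (dRep G) := by
    intro G
    funext H
    simp only [hf, hsVec, ht]
    exact_mod_cast (subCount_iso_right (H : SimpleGraph (Fin n))
      ((hrIso ⟨dRep G, hdD G⟩).some)).symm
  -- the independent index set
  set SS : Finset ↥R := Finset.univ \ Finset.image t Finset.univ with hSS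
  -- the family in the kernel
  set w : ↥SS → (↥R → ℝ) := fun G => sVec (dRep (G : ↥R)) - sVec ((G : ↥R) : SimpleGraph (Fin n))
    with hw
  have hwmem : ∀ G : ↥SS, w G ∈ LinearMap.ker M.mulVecLin := fun G => hmem _
  have hwInd : LinearIndependent ℝ w := by
    rw [Fintype.linearIndependent_iff]
    intro a ha
    -- rewrite as combination of the f's
    set g : ↥R → ℝ := fun H => ∑ Gs : ↥SS, a Gs *
      ((if H = t (Gs : ↥R) then (1:ℝ) else 0) - (if H = (Gs : ↥R) then (1:ℝ) else 0)) with hg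
    have hsum : ∑ H : ↥R, g H • f H = 0 := by
      have swap : ∑ H : ↥R, g H • f H
          = ∑ Gs : ↥SS, ∑ H : ↥R, (a Gs *
              ((if H = t (Gs : ↥R) then (1:ℝ) else 0) - (if H = (Gs : ↥R) then (1:ℝ) else 0))) • f H := by
        rw [Finset.sum_comm]
        congr 1
        funext H
        rw [hg, Finset.sum_smul]
      rw [swap]
      have inner : ∀ Gs : ↥SS, (∑ H : ↥R, (a Gs *
            ((if H = t (Gs : ↥R) then (1:ℝ) else 0) - (if H = (Gs : ↥R) then (1:ℝ) else 0))) • f H)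
          = a Gs • (f (t (Gs : ↥R)) - f (Gs : ↥R)) := by
        intro Gs
        have : ∀ H : ↥R, (a Gs *
            ((if H = t (Gs : ↥R) then (1:ℝ) else 0) - (if H = (Gs : ↥R) then (1:ℝ) else 0))) • f H
            = (if H = t (Gs : ↥R) then a Gs • f H else 0)
              - (if H = (Gs : ↥R) then a Gs • f H else 0) := by
          intro H
          by_cases h1 : H = t (Gs : ↥R) <;> by_cases h2 : H = (Gs : ↥R) <;>
            simp [h1, h2, sub_smul, mul_sub]
        simp only [this, Finset.sum_sub_distrib, Finset.sum_ite_eq' Finset.univ,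
          Finset.mem_univ, if_true, smul_sub]
      simp only [inner]
      calc ∑ Gs : ↥SS, a Gs • (f (t (Gs : ↥R)) - f (Gs : ↥R))
          = ∑ Gs : ↥SS, a Gs • w Gs := by
            congr 1; funext Gs; rw [hft, hw]
        _ = 0 := ha
    have hg0 := Fintype.linearIndependent_iff.mp hfInd g hsum
    intro i
    have hnotim : (i : ↥R) ∉ Finset.image t Finset.univ := by
      have h : (i : ↥R) ∈ Finset.univ \ Finset.image t Finset.univ := by
        rw [← hSS]; exact i.2
      exact (Finset.mem_sdiff.mp h).2
    have this : (∑ Gs : ↥SS, a Gs *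
        ((if (i : ↥R) = t (Gs : ↥R) then (1:ℝ) else 0)
          - (if (i : ↥R) = (Gs : ↥R) then (1:ℝ) else 0))) = 0 := hg0 (i : ↥R)
    have heval : ∀ Gs : ↥SS, a Gs *
        ((if (i : ↥R) = t (Gs : ↥R) then (1:ℝ) else 0) - (if (i : ↥R) = (Gs : ↥R) then (1:ℝ) else 0))
        = -(if Gs = i then a Gs else 0) := by
      intro Gs
      have h1 : (i : ↥R) ≠ t (Gs : ↥R) := by
        intro hcon
        exact hnotim (Finset.mem_image.mpr ⟨(Gs : ↥R), Finset.mem_univ _, hcon.symm⟩)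
      by_cases h2 : Gs = i
      · subst h2
        simp [h1]
      · have h2' : (i : ↥R) ≠ (Gs : ↥R) := fun hc => h2 (Subtype.ext hc.symm)
        simp [h1, h2', h2]
    rw [Finset.sum_congr rfl (fun Gs _ => heval Gs)] at this
    simp only [Finset.sum_neg_distrib, Finset.sum_ite_eq' Finset.univ, Finset.mem_univ,
      if_true, neg_eq_zero] at this
    exact this
  -- the span of the w's is inside the kernel
  have hspan : Submodule.span ℝ (Set.range w) ≤ LinearMap.ker M.mulVecLin := by
    rw [Submodule.span_le]
    rintro x ⟨G, rfl⟩
    exact hwmem G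
  have hcard1 : Fintype.card ↥SS ≤ Module.finrank ℝ (LinearMap.ker M.mulVecLin) := by
    rw [← finrank_span_eq_card hwInd]
    exact Submodule.finrank_mono hspan
  have hcard2 : R.card - D.card ≤ Fintype.card ↥SS := by
    have h1 : Fintype.card ↥SS = SS.card := Fintype.card_coe SS
    have h2 : SS.card = (Finset.univ : Finset ↥R).card - (Finset.image t Finset.univ).card := by
      rw [hSS]
      exact Finset.card_sdiff_of_subset (Finset.subset_univ _)
    have h3 : (Finset.image t Finset.univ).card ≤ D.card := by
      have hfac : t = (fun Hd : ↥D => (⟨rRep Hd, hrR Hd⟩ : ↥R)) ∘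
          (fun Gs : ↥R => (⟨dRep Gs, hdD Gs⟩ : ↥D)) := rfl
      calc (Finset.image t Finset.univ).card
          ≤ Fintype.card ↥D := by
            rw [hfac, ← Finset.image_image]
            exact le_trans Finset.card_image_le (Finset.card_le_univ _)
        _ = D.card := Fintype.card_coe D
    have h4 : (Finset.univ : Finset ↥R).card = R.card := by
      rw [Finset.card_univ]; exact Fintype.card_coe R
    rw [h1, h2, h4]
    exact Nat.sub_le_sub_left h3 R.card
  exact le_trans hcard2 hcard1
end

section
/- Let n ≥ 3 and let C be a class of n-vertex simple graphs that is closed under isomorphism, recognisable, and satisfies Kocay's lemma for a finite family 𝔉 = (𝓕_1, …, 𝓕_l) of finite sequences of simple graphs each with fewer than n vertices. Let M be the real matrix with rows indexed by the sequences in 𝔉 and columns indexed by the isomorphism classes of graphs in C, whose (𝓕, [H]) entry is the covering number c(𝓕, H). Then |C/∼| ≥ rank_ℝ(M), i.e., the number of equivalence classes of C under the reconstruction relation ∼ is at least the rank of M over ℝ. -/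
open SimpleGraph

/-!
Let `S` be the matrix `(s(H, G))` over a transversal `R` of the isomorphism classes of `C`. If
`s(H, G) ≠ 0` for non-isomorphic `n`-vertex graphs then `H` is isomorphic to a proper spanning
subgraph of `G`, so `H` has fewer edges; ordering `R` by edge count makes `S` triangular with
positive diagonal, hence invertible, and `rank M = rank (M S)`. The column of `M S` at `G` is
`(Σ_H c(𝓕_i, H) s(H, G))_i`, which by Kocay's lemma only depends on the reconstruction class of
`G`. So `M S` has at most `|C/∼|` distinct columns.
-/

open Finset

theorem Matrix.det_eq_prod_diag_of_lt {ι α R : Type*} [Fintype ι] [DecidableEq ι]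
    [LinearOrder α] [CommRing R] (M : Matrix ι ι R) (b : ι → α)
    (hb : ∀ i j, i ≠ j → M i j ≠ 0 → b i < b j) : M.det = ∏ i, M i i := by
  have hM : M.BlockTriangular b := fun i j hji => by
    by_contra h
    exact (hb i j (by rintro rfl; exact hji.false) h).not_gt hji
  have hblock : ∀ a, M.toSquareBlock b a = Matrix.diagonal fun i : {i // b i = a} => M i i := by
    intro a
    ext i j
    by_cases hij : i = j
    · subst hij
      simp [Matrix.toSquareBlock_def]
    · have hij' : (i : ι) ≠ j := fun h => hij (Subtype.ext h)
      simp only [Matrix.toSquareBlock_def, Matrix.of_apply, Matrix.diagonal_apply_ne _ hij]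
      by_contra h
      exact (hb i j hij' h).ne (i.2.trans j.2.symm)
  rw [hM.det]
  simp only [hblock, Matrix.det_diagonal]
  rw [← prod_fiberwise_of_maps_to (fun i _ => mem_image_of_mem b (mem_univ i))]
  exact prod_congr rfl fun a _ => (prod_subtype _ (fun i => by simp) fun i => M i i).symm

theorem Matrix.rank_le_card_of_mul_eq_submatrix {m ι κ K : Type*} [Fintype ι] [DecidableEq ι]
    [Fintype κ] [Field K] (A : Matrix m ι K) (S : Matrix ι ι K) (hS : IsUnit S.det)
    (B : Matrix m κ K) (φ : ι → κ) (h : A * S = B.submatrix id φ) :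
    A.rank ≤ Fintype.card κ :=
  calc A.rank = (A * S).rank := (Matrix.rank_mul_eq_left_of_isUnit_det S A hS).symm
    _ ≤ B.rank := h ▸ B.rank_submatrix_le id φ
    _ ≤ Fintype.card κ := B.rank_le_card_width

theorem SimpleGraph.Iso.ncard_edgeSet_eq {V W : Type*} {A : SimpleGraph V} {B : SimpleGraph W}
    (e : A ≃g B) : A.edgeSet.ncard = B.edgeSet.ncard := by
  rw [← Nat.card_coe_set_eq, ← Nat.card_coe_set_eq]
  exact Nat.card_congr e.mapEdgeSet

section SubgraphCounts

variable {n : ℕ}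

theorem subCount_self_pos (G : SimpleGraph (Fin n)) : 0 < subCount G G :=
  have : Nonempty {H : G.Subgraph // Nonempty (G ≃g H.coe)} := ⟨⟨⊤, ⟨Subgraph.topIso.symm⟩⟩⟩
  Nat.card_pos

theorem exists_le_nonempty_iso_of_subCount_ne_zero {H G : SimpleGraph (Fin n)}
    (h : subCount H G ≠ 0) : ∃ K, K ≤ G ∧ Nonempty (H ≃g K) := by
  obtain ⟨⟨G', ⟨e⟩⟩⟩ := (Nat.card_ne_zero.mp h).1
  have hspan : G'.IsSpanning := by
    rw [Subgraph.isSpanning_iff]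
    refine Set.eq_of_subset_of_ncard_le (Set.subset_univ _) ?_ (Set.toFinite _)
    rw [Set.ncard_univ, ← Nat.card_coe_set_eq, ← Nat.card_congr e.toEquiv]
  exact ⟨G'.spanningCoe, G'.spanningCoe_le, ⟨e.trans (G'.spanningCoeEquivCoeOfSpanning hspan).symm⟩⟩

theorem ncard_edgeSet_lt_of_subCount_ne_zero {H G : SimpleGraph (Fin n)}
    (h : subCount H G ≠ 0) (hHG : IsEmpty (H ≃g G)) : H.edgeSet.ncard < G.edgeSet.ncard := by
  obtain ⟨K, hKG, ⟨e⟩⟩ := exists_le_nonempty_iso_of_subCount_ne_zero h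
  rw [e.ncard_edgeSet_eq]
  refine Set.ncard_lt_ncard ((edgeSet_mono hKG).ssubset_of_ne fun hK => ?_)
    (Set.toFinite _)
  exact hHG.false (edgeSet_injective hK ▸ e)

theorem IsIsoTransversal.eq_of_iso {C : Set (SimpleGraph (Fin n))}
    {R : Finset (SimpleGraph (Fin n))} (hR : IsIsoTransversal C R) {H G : SimpleGraph (Fin n)}
    (hH : H ∈ R) (hG : G ∈ R) (hHG : Nonempty (H ≃g G)) : H = G :=
  (hR.2 H (hR.1 hH)).unique ⟨hH, ⟨Iso.refl⟩⟩ ⟨hG, hHG⟩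

noncomputable def subCountMatrix (R : Finset (SimpleGraph (Fin n))) : Matrix R R ℝ :=
  Matrix.of fun H G => (subCount (H : SimpleGraph (Fin n)) (G : SimpleGraph (Fin n)) : ℝ)

theorem isUnit_det_subCountMatrix {R : Finset (SimpleGraph (Fin n))} [DecidableEq R]
    (hR : ∀ H ∈ R, ∀ G ∈ R, Nonempty (H ≃g G) → H = G) : IsUnit (subCountMatrix R).det := by
  rw [Matrix.det_eq_prod_diag_of_lt _ fun H : R => (H : SimpleGraph (Fin n)).edgeSet.ncard]
  · exact isUnit_iff_ne_zero.mpr <| prod_ne_zero_iff.mpr fun G _ => by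
      simpa [subCountMatrix] using (subCount_self_pos G.1).ne'
  · intro H G hHG hS
    refine ncard_edgeSet_lt_of_subCount_ne_zero (by simpa [subCountMatrix] using hS) ?_
    exact not_nonempty_iff.mp fun he => hHG (Subtype.ext (hR _ H.2 _ G.2 he))

end SubgraphCounts

theorem stmt_6_general {n l : ℕ} (C : Set (SimpleGraph (Fin n)))
    (𝔉 : Fin l → GSeq)
    (R : Finset (SimpleGraph (Fin n))) (hR : IsIsoTransversal C R)
    (hKocay : ∀ i : Fin l, ∀ G ∈ C, ∀ G' ∈ C, IsReconstruction G G' →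
      ∑ H ∈ R, coverCount (𝔉 i) H * subCount H G' =
        ∑ H ∈ R, coverCount (𝔉 i) H * subCount H G)
    (D : Finset (SimpleGraph (Fin n))) (hD : IsReconTransversal C D) :
    (Matrix.of fun (i : Fin l) (H : ↥R) =>
        ((coverCount (𝔉 i) (H : SimpleGraph (Fin n)) : ℝ))).rank ≤ D.card := by
  classical
  choose φ hφD hφrec using fun G : R => (hD.2 G (hR.1 G.2)).exists
  let B : Matrix (Fin l) D ℝ := Matrix.of fun i d =>
    ((∑ H ∈ R, coverCount (𝔉 i) H * subCount H (d : SimpleGraph (Fin n)) : ℕ) : ℝ)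
  have hS := isUnit_det_subCountMatrix fun H hH G hG => hR.eq_of_iso hH hG
  refine (Matrix.rank_le_card_of_mul_eq_submatrix _ _ hS B (fun G => ⟨φ G, hφD G⟩) ?_).trans
    (Fintype.card_coe D).le
  ext i G
  have hcol := hKocay i G (hR.1 G.2) (φ G) (hD.1 (hφD G)) (hφrec G)
  rw [Matrix.mul_apply, Matrix.submatrix_apply, id_eq]
  change _ = ((∑ H ∈ R, coverCount (𝔉 i) H * subCount H (φ G) : ℕ) : ℝ)
  rw [hcol, Nat.cast_sum, ← sum_coe_sort R]
  simp only [Matrix.of_apply, subCountMatrix, Nat.cast_mul]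

/-- Let `n ≥ 3` and let `C` be a class of `n`-vertex graphs closed under
isomorphism, recognisable, and satisfying Kocay's lemma for a finite family
`𝔉 = (L_1, …, L_l)` of sequences of graphs with fewer than `n` vertices. Let `M`
be the matrix of covering numbers `c(L_i, H)`, with rows indexed by `Fin l` and
columns indexed by the isomorphism classes of graphs in `C` (a transversal `R`).
Then `|C/∼| ≥ rank_ℝ(M)`, where `|C/∼| = D.card` for any transversal `D` of the
reconstruction classes of `C`. -/
theorem stmt_6 {n l : ℕ} (hn : 3 ≤ n) (C : Set (SimpleGraph (Fin n)))
    (hiso : ∀ G ∈ C, ∀ H, Nonempty (G ≃g H) → H ∈ C)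
    (hrecog : ∀ G ∈ C, ∀ H, IsReconstruction G H → H ∈ C)
    (𝔉 : Fin l → GSeq) (h𝔉 : ∀ i : Fin l, ∀ F ∈ 𝔉 i, F.1 < n)
    (R : Finset (SimpleGraph (Fin n))) (hR : IsIsoTransversal C R)
    (hKocay : ∀ i : Fin l, ∀ G ∈ C, ∀ G' ∈ C, IsReconstruction G G' →
      ∑ H ∈ R, coverCount (𝔉 i) H * subCount H G' =
        ∑ H ∈ R, coverCount (𝔉 i) H * subCount H G)
    (D : Finset (SimpleGraph (Fin n))) (hD : IsReconTransversal C D) :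
    (Matrix.of fun (i : Fin l) (H : ↥R) =>
        ((coverCount (𝔉 i) (H : SimpleGraph (Fin n)) : ℝ))).rank ≤ D.card :=
  stmt_6_general C 𝔉 R hR hKocay D hD
end

section
/- Let n ≥ 3 and let C be a class of n-vertex simple graphs that is closed under isomorphism, recognisable, and satisfies Kocay's lemma for a finite family 𝔉 = (𝓕_1, …, 𝓕_l) of finite sequences of simple graphs each with fewer than n vertices. Let M be the real matrix with rows indexed by the sequences in 𝔉 and columns indexed by the isomorphism classes of graphs in C, whose (𝓕, [H]) entry is the covering number c(𝓕, H). If rank_ℝ(M) = |C/≅| (the number of isomorphism classes of graphs in C), then every graph in C is reconstructible, i.e., for all G, G' ∈ C, G' ∼ G implies G' ≅ G. -/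
open SimpleGraph

/-!
By Kocay's lemma the vectors `(s(H,G))_{[H]}` and `(s(H,G'))_{[H]}` have the same image under
the covering matrix, which is injective when it has full column rank; so `s(H,G) = s(H,G')`
for every class `[H]` in `C`. Taking `H ≅ G` and `H ≅ G'` shows that each of `G`, `G'` contains
a copy of the other, and finite graphs that contain copies of each other are isomorphic.
-/

theorem Matrix.mulVec_injective_of_rank_eq_card {R m n : Type*} [CommSemiring R]
    [OrzechProperty R] [Nontrivial R] [Fintype n] (A : Matrix m n R) (h : A.rank = Fintype.card n) : Function.Injective A.mulVec := by
  rw [Matrix.mulVec_injective_iff, linearIndependent_iff_card_eq_finrank_span, ← h,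
    Matrix.rank_eq_finrank_span_cols, Set.finrank]

theorem Finset.eq_of_sum_mul_eq_of_rank_eq_card {ι α : Type*} (c : ι → α → ℕ)
    (R : Finset α) {x y : α → ℕ}
    (h : ∀ i, ∑ a ∈ R, c i a * x a = ∑ a ∈ R, c i a * y a)
    (hrank : (Matrix.of fun i (a : R) => (c i a : ℝ)).rank = R.card) :
    ∀ a ∈ R, x a = y a := by
  have hmul : (Matrix.of fun i (a : R) => (c i a : ℝ)).mulVec (fun a => (x a : ℝ)) =
      (Matrix.of fun i (a : R) => (c i a : ℝ)).mulVec (fun a => (y a : ℝ)) := by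
    ext i
    simp only [Matrix.mulVec, dotProduct, Matrix.of_apply]
    rw [Finset.sum_coe_sort R (fun a => (c i a : ℝ) * x a),
      Finset.sum_coe_sort R (fun a => (c i a : ℝ) * y a)]
    exact_mod_cast h i
  intro a ha
  exact_mod_cast congrFun (Matrix.mulVec_injective_of_rank_eq_card _
    (by rw [hrank, Fintype.card_coe]) hmul) ⟨a, ha⟩

namespace SimpleGraph

variable {α β : Type*} {A : SimpleGraph α} {B : SimpleGraph β}

noncomputable def Copy.isoOfSurjective (f : Copy A B) (hv : Function.Surjective f)
    (he : Function.Surjective f.mapEdgeSet) : A ≃g B where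
  toEquiv := Equiv.ofBijective f ⟨f.injective, hv⟩
  map_rel_iff' {a b} := by
    refine ⟨fun hab => ?_, fun hab => f.toHom.map_adj hab⟩
    obtain ⟨⟨e, he'⟩, hfe⟩ := he ⟨s(f a, f b), hab⟩
    obtain rfl : e = s(a, b) := Sym2.map.injective f.injective (congrArg Subtype.val hfe)
    exact he'

theorem IsContained.antisymm [Finite α] [Finite β] (h : A ⊑ B) (h' : B ⊑ A) :
    Nonempty (A ≃g B) := by
  obtain ⟨f⟩ := h
  obtain ⟨g⟩ := h'
  exact ⟨f.isoOfSurjective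
    (f.injective.bijective_of_nat_card_le (Nat.card_le_card_of_injective g g.injective)).2
    (f.mapEdgeSet.injective.bijective_of_nat_card_le
      (Nat.card_le_card_of_injective _ g.mapEdgeSet.injective)).2⟩

end SimpleGraph

theorem subCount_ne_zero_iff {k n : ℕ} {F : SimpleGraph (Fin k)} {G : SimpleGraph (Fin n)} :
    subCount F G ≠ 0 ↔ F ⊑ G := by
  classical
  rw [subCount, Nat.card_ne_zero, isContained_iff_exists_iso_subgraph, nonempty_subtype]
  exact and_iff_left inferInstance

theorem stmt_8_general {n l : ℕ} (C : Set (SimpleGraph (Fin n)))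
    (𝔉 : Fin l → GSeq)
    (R : Finset (SimpleGraph (Fin n))) (hR : IsIsoTransversal C R)
    (hKocay : ∀ i : Fin l, ∀ G ∈ C, ∀ G' ∈ C, IsReconstruction G G' →
      ∑ H ∈ R, coverCount (𝔉 i) H * subCount H G' =
        ∑ H ∈ R, coverCount (𝔉 i) H * subCount H G)
    (hrank : (Matrix.of fun (i : Fin l) (H : ↥R) =>
        ((coverCount (𝔉 i) (H : SimpleGraph (Fin n)) : ℝ))).rank = R.card) :
    ∀ G ∈ C, ∀ G' ∈ C, IsReconstruction G G' → Nonempty (G' ≃g G) := by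
  intro G hG G' hG' hrec
  have hsub : ∀ H ∈ R, subCount H G' = subCount H G :=
    Finset.eq_of_sum_mul_eq_of_rank_eq_card _ R (hKocay · G hG G' hG' hrec) hrank
  obtain ⟨H, ⟨hH, ⟨eG⟩⟩, -⟩ := hR.2 G hG
  obtain ⟨H', ⟨hH', ⟨eG'⟩⟩, -⟩ := hR.2 G' hG'
  have hH'G : H' ⊑ G := by
    rw [← subCount_ne_zero_iff, ← hsub H' hH', subCount_ne_zero_iff]
    exact eG'.isContained'
  have hHG' : H ⊑ G' := by
    rw [← subCount_ne_zero_iff, hsub H hH, subCount_ne_zero_iff]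
    exact eG.isContained'
  exact IsContained.antisymm ((isContained_congr_left eG'.symm).mp hH'G)
    ((isContained_congr_left eG.symm).mp hHG')

/-- Let `n ≥ 3` and let `C` be a class of `n`-vertex graphs closed under
isomorphism, recognisable, and satisfying Kocay's lemma for a finite family
`𝔉 = (L_1, …, L_l)` of sequences of graphs with fewer than `n` vertices. Let `M`
be the matrix of covering numbers `c(L_i, H)`, with rows indexed by `Fin l` and
columns indexed by the isomorphism classes of graphs in `C` (a transversal `R`).
If `rank_ℝ(M) = |C/≅| = R.card`, then every graph in `C` is reconstructible:
for all `G, G' ∈ C`, if `G'` is a reconstruction of `G` then `G' ≅ G`. -/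
theorem stmt_8 {n l : ℕ} (hn : 3 ≤ n) (C : Set (SimpleGraph (Fin n)))
    (hiso : ∀ G ∈ C, ∀ H, Nonempty (G ≃g H) → H ∈ C)
    (hrecog : ∀ G ∈ C, ∀ H, IsReconstruction G H → H ∈ C)
    (𝔉 : Fin l → GSeq) (h𝔉 : ∀ i : Fin l, ∀ F ∈ 𝔉 i, F.1 < n)
    (R : Finset (SimpleGraph (Fin n))) (hR : IsIsoTransversal C R)
    (hKocay : ∀ i : Fin l, ∀ G ∈ C, ∀ G' ∈ C, IsReconstruction G G' →
      ∑ H ∈ R, coverCount (𝔉 i) H * subCount H G' =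
        ∑ H ∈ R, coverCount (𝔉 i) H * subCount H G)
    (hrank : (Matrix.of fun (i : Fin l) (H : ↥R) =>
        ((coverCount (𝔉 i) (H : SimpleGraph (Fin n)) : ℝ))).rank = R.card) :
    ∀ G ∈ C, ∀ G' ∈ C, IsReconstruction G G' → Nonempty (G' ≃g G) :=
  stmt_8_general C 𝔉 R hR hKocay hrank
end

section
/- Let G and H be n-vertex simple graphs. Suppose there exists a bijection f : V(G) → V(H) such that for every vertex v of G, the vertex-deleted subgraph G − v is isomorphic to a subgraph of H − f(v), and there exists a bijection g : V(H) → V(G) such that for every vertex w of H, the vertex-deleted subgraph H − w is isomorphic to a subgraph of G − g(w). Then for every vertex v of G, G − v is isomorphic to H − f(v); in particular, H is a reconstruction of G. -/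
open SimpleGraph

lemma edge_ncard_eq_of_iso {V W : Type*} (A : SimpleGraph V) (B : SimpleGraph W)
    (φ : A ≃g B) : A.edgeSet.ncard = B.edgeSet.ncard := by
  rw [← Nat.card_coe_set_eq, ← Nat.card_coe_set_eq]
  exact Nat.card_congr φ.mapEdgeSet

lemma coe_edge_ncard {W : Type*} {B : SimpleGraph W} (S : B.Subgraph) :
    S.coe.edgeSet.ncard = S.edgeSet.ncard := by
  rw [← S.image_coe_edgeSet_coe]
  exact (Set.ncard_image_of_injective _ (Sym2.map.injective Subtype.coe_injective)).symm

lemma sub_edge_le {V W : Type*} [Finite W] (A : SimpleGraph V) (B : SimpleGraph W)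
    (S : B.Subgraph) (φ : A ≃g S.coe) : A.edgeSet.ncard ≤ B.edgeSet.ncard := by
  rw [edge_ncard_eq_of_iso A S.coe φ, coe_edge_ncard]
  exact Set.ncard_le_ncard S.edgeSet_subset B.edgeSet.toFinite

lemma iso_of_eq_card {V W : Type*} [Finite V] [Finite W] (A : SimpleGraph V)
    (B : SimpleGraph W) (S : B.Subgraph) (φ : A ≃g S.coe)
    (hV : Nat.card V = Nat.card W)
    (hE : A.edgeSet.ncard = B.edgeSet.ncard) : Nonempty (A ≃g B) := by
  have hverts : S.verts = Set.univ := by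
    apply Set.eq_of_subset_of_ncard_le (Set.subset_univ _) _ (Set.finite_univ)
    have : Nat.card S.verts = Nat.card V := (Nat.card_congr φ.toEquiv).symm
    rw [Set.ncard_univ, ← Nat.card_coe_set_eq, this, hV]
  have hedges : S.edgeSet = B.edgeSet := by
    apply Set.eq_of_subset_of_ncard_le S.edgeSet_subset _ B.edgeSet.toFinite
    rw [← coe_edge_ncard, ← edge_ncard_eq_of_iso A S.coe φ, hE]
  have hS : S = ⊤ := by
    ext x y
    · simp [hverts]
    · rw [← Subgraph.mem_edgeSet, hedges, Subgraph.top_adj, mem_edgeSet]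
  subst hS
  exact ⟨φ.trans Subgraph.topIso⟩

/-- Let `G` and `H` be `n`-vertex graphs. Suppose there is a bijection `f`
such that `G − v` is isomorphic to a subgraph of `H − f v` for every vertex `v`
of `G`, and a bijection `g` such that `H − w` is isomorphic to a subgraph of
`G − g w` for every vertex `w` of `H`. Then `G − v ≅ H − f v` for every `v`;
in particular, `H` is a reconstruction of `G`. -/
theorem stmt_13 {n : ℕ} (G H : SimpleGraph (Fin n))
    (f : Fin n ≃ Fin n)
    (hf : ∀ v : Fin n, ∃ S : (vdel H (f v)).Subgraph,
      Nonempty (vdel G v ≃g S.coe))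
    (g : Fin n ≃ Fin n)
    (hg : ∀ w : Fin n, ∃ S : (vdel G (g w)).Subgraph,
      Nonempty (vdel H w ≃g S.coe)) :
    (∀ v : Fin n, Nonempty (vdel G v ≃g vdel H (f v))) ∧
      IsReconstruction G H := by
  set eG : Fin n → ℕ := fun v => (vdel G v).edgeSet.ncard with heG
  set eH : Fin n → ℕ := fun w => (vdel H w).edgeSet.ncard with heH
  have h1 : ∀ v, eG v ≤ eH (f v) := fun v => by
    obtain ⟨S, ⟨φ⟩⟩ := hf v
    exact sub_edge_le _ _ S φ
  have h2 : ∀ w, eH w ≤ eG (g w) := fun w => by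
    obtain ⟨S, ⟨φ⟩⟩ := hg w
    exact sub_edge_le _ _ S φ
  have hsum : ∑ v, eG v = ∑ v, eH (f v) := by
    apply le_antisymm (Finset.sum_le_sum fun v _ => h1 v)
    calc ∑ v, eH (f v) = ∑ w, eH w := Fintype.sum_equiv f _ _ (fun _ => rfl)
      _ ≤ ∑ w, eG (g w) := Finset.sum_le_sum fun w _ => h2 w
      _ = ∑ v, eG v := Fintype.sum_equiv g _ _ (fun _ => rfl)
  have heq : ∀ v, eG v = eH (f v) := by
    intro v
    exact (Finset.sum_eq_sum_iff_of_le (fun i _ => h1 i)).mp hsum v (Finset.mem_univ v)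
  have main : ∀ v : Fin n, Nonempty (vdel G v ≃g vdel H (f v)) := by
    intro v
    obtain ⟨S, ⟨φ⟩⟩ := hf v
    apply iso_of_eq_card _ _ S φ _ (heq v)
    simp only [Nat.card_eq_fintype_card]
    rw [Fintype.card_compl_set, Fintype.card_compl_set]
    simp
  exact ⟨main, ⟨f, main⟩⟩
end
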